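/- arXiv:2603.02469 — 4 statements merged into one kernel-verified Lean document; each statement's English description precedes it below -/
import Mathlib

section
/- For every graph G, every vertex subset U, every vertex v, and every natural number k, the (v,v)-entry of the k-th power of the Seidel matrix of G equals the (v,v)-entry of the k-th power of the Seidel matrix of the switching G^U. -/
open Matrix
open scoped Classical

/-- The Seidel matrix `S(G) = J - I - 2A(G)` of a simple graph. -/
noncomputable def seidel {V : Type*} [Fintype V] [DecidableEq V] (G : SimpleGraph V) :
    Matrix V V ℝ :=
  Matrix.of fun i j => if i = j then 0 else if G.Adj i j then -1 else 1

/-- The switching of `G` with respect to a vertex set `U`: adjacency between `U` and its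
complement is toggled. -/
def SimpleGraph.switch {V : Type*} (G : SimpleGraph V) (U : Set V) : SimpleGraph V where
  Adj i j := i ≠ j ∧ (G.Adj i j ↔ ((i ∈ U) ↔ (j ∈ U)))
  symm := by
    constructor
    intro i j h
    refine ⟨h.1.symm, ?_⟩
    rw [SimpleGraph.adj_comm]
    tauto
  loopless := by constructor; intro i h; exact h.1 rfl

/-- `G` and `H` are switching equivalent: `H` is isomorphic to some switching of `G`. -/
def SwitchingEquiv {V W : Type*} (G : SimpleGraph V) (H : SimpleGraph W) : Prop :=
  ∃ U : Set V, Nonempty (H ≃g G.switch U)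

/-- Every connected component of `G` is an isolated vertex, a single edge,
or a path on three vertices (a cherry). -/
def IsCherryForest {V : Type*} (G : SimpleGraph V) : Prop :=
  ∀ c : G.ConnectedComponent,
    Nonempty (G.induce c.supp ≃g SimpleGraph.pathGraph 1) ∨
    Nonempty (G.induce c.supp ≃g SimpleGraph.pathGraph 2) ∨
    Nonempty (G.induce c.supp ≃g SimpleGraph.pathGraph 3)

/-- the `k`-th Seidel degree of a vertex (the `(v,v)`-entry of the `k`-th
power of the Seidel matrix) is invariant under switching. -/
theorem seidel_degree_switch_invariant {n : ℕ} (G : SimpleGraph (Fin n)) (U : Set (Fin n))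
    (v : Fin n) (k : ℕ) :
    ((seidel G) ^ k) v v = ((seidel (G.switch U)) ^ k) v v := by
  set d : Fin n → ℝ := fun i => if i ∈ U then (-1 : ℝ) else 1 with hd
  set D : Matrix (Fin n) (Fin n) ℝ := Matrix.diagonal d with hD
  have hdsq : ∀ i, d i * d i = 1 := by
    intro i; simp only [hd]; split <;> norm_num
  have hDD : D * D = 1 := by
    rw [hD, Matrix.diagonal_mul_diagonal]
    have : (fun i => d i * d i) = fun _ : Fin n => (1:ℝ) := funext hdsq
    rw [this]
    exact Matrix.diagonal_one
  have hS : seidel (G.switch U) = D * seidel G * D := by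
    ext i j
    rw [hD, Matrix.mul_diagonal, Matrix.diagonal_mul]
    simp only [seidel, SimpleGraph.switch, Matrix.of_apply, hd]
    by_cases hij : i = j
    · simp [hij]
    · simp only [hij, if_false, ne_eq]
      by_cases hiU : i ∈ U <;> by_cases hjU : j ∈ U <;>
        by_cases hA : G.Adj i j <;>
        simp [hiU, hjU, hA, hij] <;> tauto
  have key : ∀ m : ℕ, (seidel (G.switch U)) ^ m = D * (seidel G) ^ m * D := by
    intro m
    induction m with
    | zero => simp [pow_zero, mul_one, hDD]
    | succ m ih =>
      rw [pow_succ, pow_succ, ih, hS]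
      calc D * (seidel G) ^ m * D * (D * seidel G * D)
          = D * (seidel G) ^ m * (D * D) * seidel G * D := by
            simp only [Matrix.mul_assoc]
        _ = D * ((seidel G) ^ m * seidel G) * D := by
            rw [hDD]; simp only [Matrix.mul_assoc, Matrix.one_mul]
  rw [key k, hD, Matrix.mul_diagonal, Matrix.diagonal_mul]
  rw [mul_comm, ← mul_assoc, hdsq v, one_mul]
end

section
/- Let G be a graph each of whose components is an isolated vertex, an edge, or a path on three vertices, with c ≥ 1 components equal to the path on three vertices, and suppose rank(S(G) + (1+2√2)I) ≤ d. Then n − c ≤ d − 1, where n is the order of G. -/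
open Matrix
open scoped Classical

private lemma adj_mem_supp {n : ℕ} {G : SimpleGraph (Fin n)} {comp : G.ConnectedComponent}
    {v w : Fin n} (hv : v ∈ comp.supp) (h : G.Adj v w) : w ∈ comp.supp := by
  rw [SimpleGraph.ConnectedComponent.mem_supp_iff] at *
  rw [← hv]
  exact SimpleGraph.ConnectedComponent.connectedComponentMk_eq_of_adj h.symm

private lemma iso_adj_iff {n k : ℕ} {G : SimpleGraph (Fin n)} {comp : G.ConnectedComponent}
    (e : G.induce comp.supp ≃g SimpleGraph.pathGraph k) (i j : Fin k) :
    G.Adj ↑(e.symm i) ↑(e.symm j) ↔ (SimpleGraph.pathGraph k).Adj i j := by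
  rw [← e.symm.map_adj_iff]
  simp [SimpleGraph.comap_adj]

private lemma iso_supp_eq {n k : ℕ} {G : SimpleGraph (Fin n)} {comp : G.ConnectedComponent}
    (e : G.induce comp.supp ≃g SimpleGraph.pathGraph k) :
    comp.supp = Set.range (fun i : Fin k => (↑(e.symm i) : Fin n)) := by
  ext v
  constructor
  · intro hv
    exact ⟨e ⟨v, hv⟩, by simp⟩
  · rintro ⟨i, rfl⟩
    exact (e.symm i).2

private lemma cherry_struct {n : ℕ} {G : SimpleGraph (Fin n)} {comp : G.ConnectedComponent}
    (e : G.induce comp.supp ≃g SimpleGraph.pathGraph 3) :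
    ∃ a b c : Fin n, a ≠ b ∧ a ≠ c ∧ b ≠ c ∧
      comp.supp = {a, b, c} ∧
      G.neighborFinset a = {b} ∧ G.neighborFinset b = {a, c} ∧ G.neighborFinset c = {b} := by
  set φ : Fin 3 → Fin n := fun i => ↑(e.symm i) with hφ
  have hinj : Function.Injective φ := fun i j h =>
    e.symm.injective (Subtype.ext h)
  have hadj : ∀ i j, G.Adj (φ i) (φ j) ↔ (SimpleGraph.pathGraph 3).Adj i j :=
    fun i j => iso_adj_iff e i j
  have hmem : ∀ i, φ i ∈ comp.supp := fun i => (e.symm i).2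
  have h3 : ∀ i : Fin 3, i = 0 ∨ i = 1 ∨ i = 2 := by decide
  have hsupp : comp.supp = {φ 0, φ 1, φ 2} := by
    rw [iso_supp_eq e]
    ext v
    simp only [Set.mem_range, Set.mem_insert_iff, Set.mem_singleton_iff]
    constructor
    · rintro ⟨i, rfl⟩
      rcases h3 i with h | h | h <;> subst h <;> tauto
    · rintro (rfl | rfl | rfl) <;> [exact ⟨0, rfl⟩; exact ⟨1, rfl⟩; exact ⟨2, rfl⟩]
  have hmemiff : ∀ w, w ∈ comp.supp ↔ (w = φ 0 ∨ w = φ 1 ∨ w = φ 2) := by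
    intro w; rw [hsupp]; simp
  have had01 : G.Adj (φ 0) (φ 1) := (hadj 0 1).mpr (by simp [SimpleGraph.pathGraph_adj])
  have had12 : G.Adj (φ 1) (φ 2) := (hadj 1 2).mpr (by simp [SimpleGraph.pathGraph_adj])
  have had02 : ¬ G.Adj (φ 0) (φ 2) := fun h => by
    have := (hadj 0 2).mp h
    simp [SimpleGraph.pathGraph_adj] at this
  refine ⟨φ 0, φ 1, φ 2, fun h => by simpa using hinj h, fun h => by simpa using hinj h,
    fun h => by simpa using hinj h, hsupp, ?_, ?_, ?_⟩
  · ext w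
    simp only [SimpleGraph.mem_neighborFinset, Finset.mem_singleton]
    constructor
    · intro h
      rcases (hmemiff w).mp (adj_mem_supp (hmem 0) h) with rfl | rfl | rfl
      · exact absurd h (G.irrefl)
      · rfl
      · exact absurd h had02
    · rintro rfl; exact had01
  · ext w
    simp only [SimpleGraph.mem_neighborFinset, Finset.mem_insert, Finset.mem_singleton]
    constructor
    · intro h
      rcases (hmemiff w).mp (adj_mem_supp (hmem 1) h) with rfl | rfl | rfl
      · exact Or.inl rfl
      · exact absurd h (G.irrefl)
      · exact Or.inr rfl
    · rintro (rfl | rfl)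
      · exact had01.symm
      · exact had12
  · ext w
    simp only [SimpleGraph.mem_neighborFinset, Finset.mem_singleton]
    constructor
    · intro h
      rcases (hmemiff w).mp (adj_mem_supp (hmem 2) h) with rfl | rfl | rfl
      · exact absurd h.symm had02
      · rfl
      · exact absurd h (G.irrefl)
    · rintro rfl; exact had12.symm

private lemma edge_struct {n : ℕ} {G : SimpleGraph (Fin n)} {comp : G.ConnectedComponent}
    (e : G.induce comp.supp ≃g SimpleGraph.pathGraph 2) :
    ∃ a b : Fin n, a ≠ b ∧ comp.supp = {a, b} ∧
      G.neighborFinset a = {b} ∧ G.neighborFinset b = {a} := by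
  set φ : Fin 2 → Fin n := fun i => ↑(e.symm i) with hφ
  have hinj : Function.Injective φ := fun i j h => e.symm.injective (Subtype.ext h)
  have hadj : ∀ i j, G.Adj (φ i) (φ j) ↔ (SimpleGraph.pathGraph 2).Adj i j :=
    fun i j => iso_adj_iff e i j
  have hmem : ∀ i, φ i ∈ comp.supp := fun i => (e.symm i).2
  have h2 : ∀ i : Fin 2, i = 0 ∨ i = 1 := by decide
  have hsupp : comp.supp = {φ 0, φ 1} := by
    rw [iso_supp_eq e]
    ext v
    simp only [Set.mem_range, Set.mem_insert_iff, Set.mem_singleton_iff]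
    constructor
    · rintro ⟨i, rfl⟩
      rcases h2 i with h | h <;> subst h <;> tauto
    · rintro (rfl | rfl) <;> [exact ⟨0, rfl⟩; exact ⟨1, rfl⟩]
  have hmemiff : ∀ w, w ∈ comp.supp ↔ (w = φ 0 ∨ w = φ 1) := by
    intro w; rw [hsupp]; simp
  have had01 : G.Adj (φ 0) (φ 1) := (hadj 0 1).mpr (by simp [SimpleGraph.pathGraph_adj])
  refine ⟨φ 0, φ 1, fun h => by simpa using hinj h, hsupp, ?_, ?_⟩
  · ext w
    simp only [SimpleGraph.mem_neighborFinset, Finset.mem_singleton]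
    constructor
    · intro h
      rcases (hmemiff w).mp (adj_mem_supp (hmem 0) h) with rfl | rfl
      · exact absurd h (G.irrefl)
      · rfl
    · rintro rfl; exact had01
  · ext w
    simp only [SimpleGraph.mem_neighborFinset, Finset.mem_singleton]
    constructor
    · intro h
      rcases (hmemiff w).mp (adj_mem_supp (hmem 1) h) with rfl | rfl
      · rfl
      · exact absurd h (G.irrefl)
    · rintro rfl; exact had01.symm

private lemma point_struct {n : ℕ} {G : SimpleGraph (Fin n)} {comp : G.ConnectedComponent}
    (e : G.induce comp.supp ≃g SimpleGraph.pathGraph 1) :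
    ∃ a : Fin n, comp.supp = {a} ∧ G.neighborFinset a = ∅ := by
  set φ : Fin 1 → Fin n := fun i => ↑(e.symm i) with hφ
  have hmem : ∀ i, φ i ∈ comp.supp := fun i => (e.symm i).2
  have hsupp : comp.supp = {φ 0} := by
    rw [iso_supp_eq e]
    ext v
    simp only [Set.mem_range, Set.mem_singleton_iff]
    constructor
    · rintro ⟨i, rfl⟩
      have : i = 0 := by omega
      subst this; rfl
    · rintro rfl; exact ⟨0, rfl⟩
  have hmemiff : ∀ w, w ∈ comp.supp ↔ w = φ 0 := by
    intro w; rw [hsupp]; simp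
  refine ⟨φ 0, hsupp, ?_⟩
  ext w
  simp only [SimpleGraph.mem_neighborFinset, Finset.notMem_empty, iff_false]
  intro h
  rcases (hmemiff w).mp (adj_mem_supp (hmem 0) h) with rfl
  exact absurd h (G.irrefl)

private lemma ker_entry {n : ℕ} (G : SimpleGraph (Fin n)) (x : Fin n → ℝ)
    (hx : (seidel G + (1 + 2 * Real.sqrt 2) • (1 : Matrix (Fin n) (Fin n) ℝ)).mulVec x = 0)
    (i : Fin n) :
    2 * Real.sqrt 2 * x i = 2 * (∑ j ∈ G.neighborFinset i, x j) - ∑ j, x j := by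
  have h0 := congrFun hx i
  simp only [Matrix.mulVec, dotProduct, Matrix.add_apply, Matrix.smul_apply,
    Matrix.one_apply, seidel, Matrix.of_apply, Pi.zero_apply, smul_eq_mul] at h0
  have hterm : ∀ j, ((if i = j then (0:ℝ) else if G.Adj i j then -1 else 1)
      + (1 + 2 * Real.sqrt 2) * (if i = j then 1 else 0)) * x j
      = x j - 2 * (if G.Adj i j then x j else 0)
         + (if i = j then 2 * Real.sqrt 2 * x j else 0) := by
    intro j
    by_cases h1 : i = j
    · subst h1
      simp [G.irrefl]
      ring
    · simp [h1]
      split_ifs <;> ring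
  rw [Finset.sum_congr rfl (fun j _ => hterm j)] at h0
  rw [Finset.sum_add_distrib, Finset.sum_sub_distrib, Finset.sum_ite_eq] at h0
  simp only [Finset.mem_univ, if_true] at h0
  rw [← Finset.mul_sum, ← Finset.sum_filter, ← SimpleGraph.neighborFinset_eq_filter] at h0
  linarith

/-- if every component of `G` is an isolated vertex, an edge, or a cherry,
`c ≥ 1` of the components are cherries, and `rank(S(G) + (1+2√2)I) ≤ d`, then
`n - c ≤ d - 1`. -/
theorem order_sub_cherries_le {n d c : ℕ} (G : SimpleGraph (Fin n))
    (hG : IsCherryForest G)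
    (hc : c = Nat.card {comp : G.ConnectedComponent //
      Nonempty (G.induce comp.supp ≃g SimpleGraph.pathGraph 3)})
    (hc1 : 1 ≤ c)
    (hrank : (seidel G + (1 + 2 * Real.sqrt 2) • (1 : Matrix (Fin n) (Fin n) ℝ)).rank ≤ d) :
    n - c ≤ d - 1 := by
  classical
  have h2 : Real.sqrt 2 * Real.sqrt 2 = 2 := Real.mul_self_sqrt (by norm_num)
  set M := seidel G + (1 + 2 * Real.sqrt 2) • (1 : Matrix (Fin n) (Fin n) ℝ) with hM
  set K := LinearMap.ker M.mulVecLin with hKdef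
  letI : Fintype G.ConnectedComponent := Fintype.ofFinite _
  set p : G.ConnectedComponent → Prop :=
    fun comp => Nonempty (G.induce comp.supp ≃g SimpleGraph.pathGraph 3) with hp
  have hchoose : ∀ ch : {comp // p comp}, ∃ a b c' : Fin n, a ≠ b ∧ a ≠ c' ∧ b ≠ c' ∧
      ch.1.supp = {a, b, c'} ∧ G.neighborFinset a = {b} ∧ G.neighborFinset b = {a, c'} ∧
      G.neighborFinset c' = {b} :=
    fun ch => cherry_struct (Classical.choice ch.2)
  choose A B C hAB hAC hBC hsuppC hnA hnB hnC using hchoose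
  have hker : ∀ x ∈ K, ∀ i, 2 * Real.sqrt 2 * x i
      = 2 * (∑ j ∈ G.neighborFinset i, x j) - ∑ j, x j := by
    intro x hx i
    refine ker_entry G x ?_ i
    have := LinearMap.mem_ker.mp hx
    rwa [Matrix.mulVecLin_apply] at this
  have hne : Nonempty {comp // p comp} := by
    by_contra h
    rw [not_nonempty_iff] at h
    have h0 : Nat.card {comp // p comp} = 0 := Nat.card_of_isEmpty
    rw [hc, h0] at hc1
    exact Nat.not_succ_le_zero 0 hc1
  -- total sum is zero on the kernel
  have hs0 : ∀ x ∈ K, ∑ j, x j = 0 := by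
    intro x hx
    obtain ⟨ch⟩ := hne
    have eA := hker x hx (A ch)
    have eB := hker x hx (B ch)
    have eC := hker x hx (C ch)
    rw [hnA ch, Finset.sum_singleton] at eA
    rw [hnB ch, Finset.sum_pair (hAC ch)] at eB
    rw [hnC ch, Finset.sum_singleton] at eC
    -- derive s = 0
    have hACx : x (A ch) = x (C ch) := by
      have h' : (2 * Real.sqrt 2) * x (A ch) = (2 * Real.sqrt 2) * x (C ch) := by linarith
      exact mul_left_cancel₀ (by positivity) h'
    have key : (∑ j, x j) * (1 + Real.sqrt 2) = 0 := by
      linear_combination Real.sqrt 2 * eA + eB - 2 * hACx - 2 * x (A ch) * h2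
    have hfac : (0:ℝ) < 1 + Real.sqrt 2 := by positivity
    rcases mul_eq_zero.mp key with h | h
    · exact h
    · exact absurd h hfac.ne'
  -- vanishing off cherries
  have hvanish : ∀ x ∈ K, ∀ v : Fin n, ¬ p (G.connectedComponentMk v) → x v = 0 := by
    intro x hx v hpv
    have hs := hs0 x hx
    have hv : v ∈ (G.connectedComponentMk v).supp := by
      rw [SimpleGraph.ConnectedComponent.mem_supp_iff]
    rcases hG (G.connectedComponentMk v) with h1 | h1 | h1
    · obtain ⟨e⟩ := h1
      obtain ⟨a, hs1, hn⟩ := point_struct e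
      rw [hs1, Set.mem_singleton_iff] at hv
      subst hv
      have ea := hker x hx v
      rw [hn, Finset.sum_empty, hs] at ea
      linear_combination (Real.sqrt 2 / 4) * ea - (x v / 2) * h2
    · obtain ⟨e⟩ := h1
      obtain ⟨a, b, hab, hs2, hna, hnb⟩ := edge_struct e
      have ea := hker x hx a
      have eb := hker x hx b
      rw [hna, Finset.sum_singleton, hs] at ea
      rw [hnb, Finset.sum_singleton, hs] at eb
      have ha0 : x a = 0 := by
        linear_combination (Real.sqrt 2 / 2) * ea + (1 / 2) * eb - x a * h2
      have hb0 : x b = 0 := by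
        linear_combination (Real.sqrt 2 / 2) * eb + (1 / 2) * ea - x b * h2
      rw [hs2] at hv
      rcases hv with rfl | hv
      · exact ha0
      · rw [Set.mem_singleton_iff] at hv; subst hv; exact hb0
    · exact absurd h1 hpv
  -- cherry relations
  have hrel : ∀ x ∈ K, ∀ ch : {comp // p comp},
      Real.sqrt 2 * x (A ch) = x (B ch) ∧ Real.sqrt 2 * x (C ch) = x (B ch) := by
    intro x hx ch
    have hs := hs0 x hx
    have eA := hker x hx (A ch)
    have eC := hker x hx (C ch)
    rw [hnA ch, Finset.sum_singleton, hs] at eA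
    rw [hnC ch, Finset.sum_singleton, hs] at eC
    constructor <;> linarith
  -- middle values sum to zero on the kernel
  have hBsum : ∀ x ∈ K, ∑ ch : {comp // p comp}, x (B ch) = 0 := by
    intro x hx
    have hs := hs0 x hx
    have hfib : ∑ comp : G.ConnectedComponent,
        ∑ v ∈ Finset.univ.filter (fun v => G.connectedComponentMk v = comp), x v
        = ∑ v, x v := Finset.sum_fiberwise _ _ _
    have hcompsum : ∀ comp : G.ConnectedComponent,
        (∑ v ∈ Finset.univ.filter (fun v => G.connectedComponentMk v = comp), x v)
        = if h : p comp then (1 + Real.sqrt 2) * x (B ⟨comp, h⟩) else 0 := by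
      intro comp
      split_ifs with h
      · set ch : {comp // p comp} := ⟨comp, h⟩ with hch
        have hfilter : Finset.univ.filter (fun v => G.connectedComponentMk v = comp)
            = ({A ch, B ch, C ch} : Finset (Fin n)) := by
          ext v
          simp only [Finset.mem_filter, Finset.mem_univ, true_and,
            ← SimpleGraph.ConnectedComponent.mem_supp_iff]
          have hsp : comp.supp = {A ch, B ch, C ch} := hsuppC ch
          rw [hsp]
          simp
        rw [hfilter, Finset.sum_insert (by simp [hAB ch, hAC ch]),
          Finset.sum_insert (by simp [hBC ch]), Finset.sum_singleton]
        obtain ⟨r1, r2⟩ := hrel x hx ch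
        linear_combination (Real.sqrt 2 / 2) * r1 + (Real.sqrt 2 / 2) * r2
          - ((x (A ch) + x (C ch)) / 2) * h2
      · refine Finset.sum_eq_zero fun v hv => ?_
        rw [Finset.mem_filter] at hv
        refine hvanish x hx v ?_
        rw [hv.2]
        exact h
    rw [Finset.sum_congr rfl (fun comp _ => hcompsum comp)] at hfib
    rw [hs] at hfib
    rw [← Finset.sum_filter_add_sum_filter_not Finset.univ p] at hfib
    have hz : ∑ comp ∈ Finset.univ.filter (fun comp => ¬ p comp),
        (if h : p comp then (1 + Real.sqrt 2) * x (B ⟨comp, h⟩) else 0) = 0 :=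
      Finset.sum_eq_zero fun comp hcomp => dif_neg (Finset.mem_filter.mp hcomp).2
    rw [hz, add_zero] at hfib
    have hsub : (∑ comp ∈ Finset.univ.filter p,
        (if h : p comp then (1 + Real.sqrt 2) * x (B ⟨comp, h⟩) else 0))
        = ∑ ch : {comp // p comp},
            (if h : p (ch : G.ConnectedComponent) then (1 + Real.sqrt 2) * x (B ⟨ch, h⟩) else 0) :=
      Finset.sum_subtype _ (fun comp => by simp) _
    rw [hsub] at hfib
    have hdit : ∑ ch : {comp // p comp},
        (if h : p (ch : G.ConnectedComponent) then (1 + Real.sqrt 2) * x (B ⟨ch, h⟩) else 0)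
        = ∑ ch : {comp // p comp}, (1 + Real.sqrt 2) * x (B ch) :=
      Finset.sum_congr rfl fun ch _ => dif_pos ch.2
    rw [hdit, ← Finset.mul_sum] at hfib
    have hfac : (0:ℝ) < 1 + Real.sqrt 2 := by positivity
    rcases mul_eq_zero.mp hfib with h | h
    · exact absurd h hfac.ne'
    · exact h
  -- injectivity data: if middle values vanish, x = 0
  have hinj : ∀ x ∈ K, (∀ ch : {comp // p comp}, x (B ch) = 0) → x = 0 := by
    intro x hx hB
    funext v
    by_cases hpv : p (G.connectedComponentMk v)
    · set ch : {comp // p comp} := ⟨G.connectedComponentMk v, hpv⟩ with hch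
      have hv : v ∈ (G.connectedComponentMk v).supp := by
        rw [SimpleGraph.ConnectedComponent.mem_supp_iff]
      have hsv : (G.connectedComponentMk v).supp = {A ch, B ch, C ch} := hsuppC ch
      rw [hsv] at hv
      obtain ⟨r1, r2⟩ := hrel x hx ch
      have hB0 := hB ch
      have h2pos : (0:ℝ) < Real.sqrt 2 := Real.sqrt_pos.mpr (by norm_num)
      rcases hv with hv | hv | hv
      · rw [hv]
        have hz : Real.sqrt 2 * x (A ch) = 0 := by rw [r1, hB0]
        rcases mul_eq_zero.mp hz with h | h
        · exact absurd h h2pos.ne'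
        · exact h
      · rw [hv]; exact hB0
      · rw [Set.mem_singleton_iff] at hv
        rw [hv]
        have hz : Real.sqrt 2 * x (C ch) = 0 := by rw [r2, hB0]
        rcases mul_eq_zero.mp hz with h | h
        · exact absurd h h2pos.ne'
        · exact h
    · exact hvanish x hx v hpv
  -- linear algebra
  set Φ : (Fin n → ℝ) →ₗ[ℝ] ({comp // p comp} → ℝ) :=
    LinearMap.funLeft ℝ ℝ (fun ch => B ch) with hΦ
  set f : ({comp // p comp} → ℝ) →ₗ[ℝ] ℝ :=
    { toFun := fun y => ∑ ch, y ch
      map_add' := fun y z => by simp [Finset.sum_add_distrib]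
      map_smul' := fun r y => by simp [Finset.mul_sum] } with hf
  set H := LinearMap.ker f with hH
  have hΦK : ∀ x : K, Φ.comp K.subtype x ∈ H := by
    rintro ⟨x, hx⟩
    rw [LinearMap.mem_ker]
    have := hBsum x hx
    simpa [f, Φ, LinearMap.funLeft, Function.comp] using this
  set ψ : K →ₗ[ℝ] H := LinearMap.codRestrict H (Φ.comp K.subtype) hΦK with hψ
  have hψinj : Function.Injective ψ := by
    rw [injective_iff_map_eq_zero]
    intro a h0
    have hcoe : Φ.comp K.subtype a = 0 := by
      have := congrArg (Subtype.val) h0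
      simpa [ψ, LinearMap.codRestrict] using this
    have hBz : ∀ ch : {comp // p comp}, (a : Fin n → ℝ) (B ch) = 0 := by
      intro ch
      have := congrFun hcoe ch
      simpa [Φ, LinearMap.funLeft] using this
    exact Subtype.ext (hinj a.1 a.2 hBz)
  have hKH : Module.finrank ℝ K ≤ Module.finrank ℝ H :=
    LinearMap.finrank_le_finrank_of_injective hψinj
  -- finrank H = c - 1
  have hftop : LinearMap.range f = ⊤ := by
    rw [LinearMap.range_eq_top]
    intro r
    obtain ⟨ch0⟩ := hne
    refine ⟨Pi.single ch0 r, ?_⟩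
    simp [f, Finset.sum_pi_single']
  have hrn1 := LinearMap.finrank_range_add_finrank_ker f
  rw [hftop, finrank_top, Module.finrank_self, ← hH,
    Module.finrank_fintype_fun_eq_card, ← Nat.card_eq_fintype_card, ← hc] at hrn1
  -- hrn1 : 1 + finrank H = c
  have e1 : M.rank + Module.finrank ℝ K = n := by
    have h' := LinearMap.finrank_range_add_finrank_ker M.mulVecLin
    rwa [Module.finrank_fintype_fun_eq_card, Fintype.card_fin, ← hKdef] at h'
  have e2 : 1 + Module.finrank ℝ H = c := hrn1
  have e3 : M.rank ≤ d := hrank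
  have e4 : Module.finrank ℝ K ≤ Module.finrank ℝ H := hKH
  clear_value K M
  generalize hg1 : M.rank = a1 at e1 e3
  generalize hg2 : Module.finrank ℝ ↥K = a2 at e1 e4
  generalize hg3 : Module.finrank ℝ ↥H = a3 at e2 e4
  omega
end

section
/- For every positive integer d, the maximum order of a graph G, all of whose connected components are isolated vertices, edges, or paths on three vertices, for which rank(S(G) + (1+2√2)I) ≤ d, is exactly max(d, ⌊3(d−1)/2⌋). -/
open Matrix
open scoped Classical

lemma seidel_mulVec {n : ℕ} (G : SimpleGraph (Fin n)) (c : ℝ) (x : Fin n → ℝ) (i : Fin n) :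
    ((seidel G + c • (1 : Matrix (Fin n) (Fin n) ℝ)) *ᵥ x) i
      = (∑ j, x j) + (c - 1) * x i - 2 * ∑ j ∈ Finset.univ.filter (fun j => G.Adj i j), x j := by
  have key : ∀ j, (seidel G + c • (1 : Matrix (Fin n) (Fin n) ℝ)) i j * x j
      = x j + (if j = i then (c - 1) * x j else 0) - (if G.Adj i j then 2 * x j else 0) := by
    intro j
    simp only [Matrix.add_apply, Matrix.smul_apply, Matrix.one_apply, seidel, Matrix.of_apply,
      smul_eq_mul]
    by_cases h : i = j
    · subst h; simp [G.irrefl]; ring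
    · have h' : ¬ j = i := fun hh => h hh.symm
      by_cases ha : G.Adj i j <;> simp [h, h', ha] <;> ring
  simp only [Matrix.mulVec, dotProduct]
  rw [Finset.sum_congr rfl (fun j _ => key j), Finset.sum_sub_distrib, Finset.sum_add_distrib,
    Finset.sum_ite_eq' Finset.univ i (fun j => (c - 1) * x j)]
  simp [Finset.sum_filter, Finset.mul_sum]

section Structure
variable {V : Type*} [Fintype V] [DecidableEq V] (G : SimpleGraph V)

omit [Fintype V] [DecidableEq V] in
lemma adj_mem_supp_s9 {v w : V} (c : G.ConnectedComponent) (hv : v ∈ c.supp)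
    (h : G.Adj v w) : w ∈ c.supp := by
  rw [SimpleGraph.ConnectedComponent.mem_supp_iff] at hv ⊢
  rw [← hv]
  exact SimpleGraph.ConnectedComponent.sound h.symm.reachable

lemma filter_adj_eq (c : G.ConnectedComponent) {v : V} (hv : v ∈ c.supp) (s : Finset V)
    (h1 : ∀ u ∈ s, G.Adj v u) (h2 : ∀ u, u ∈ c.supp → G.Adj v u → u ∈ s) :
    Finset.univ.filter (fun j => G.Adj v j) = s := by
  ext u
  simp only [Finset.mem_filter, Finset.mem_univ, true_and]
  exact ⟨fun h => h2 u (adj_mem_supp_s9 G c hv h) h, h1 u⟩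

lemma card_supp_of_iso {m : ℕ} (c : G.ConnectedComponent)
    (e : G.induce c.supp ≃g SimpleGraph.pathGraph m) : Fintype.card c.supp = m := by
  simpa using Fintype.card_congr e.toEquiv

lemma path1_struct (c : G.ConnectedComponent)
    (e : G.induce c.supp ≃g SimpleGraph.pathGraph 1) :
    ∃ a : V, c.supp = {a} ∧ Finset.univ.filter (fun j => G.Adj a j) = ∅ := by
  have hcard : Fintype.card c.supp = 1 := card_supp_of_iso G c e
  obtain ⟨⟨a, ha⟩, hall⟩ := Fintype.card_eq_one_iff.mp hcard
  have hsupp : c.supp = {a} := by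
    ext w
    constructor
    · intro hw
      exact Set.mem_singleton_iff.mpr (congrArg Subtype.val (hall ⟨w, hw⟩))
    · rintro rfl; exact ha
  refine ⟨a, hsupp, filter_adj_eq G c ha ∅ (by simp) ?_⟩
  intro u hu hadj
  rw [hsupp] at hu
  exact absurd hadj (hu ▸ G.irrefl)

lemma path2_struct (c : G.ConnectedComponent)
    (e : G.induce c.supp ≃g SimpleGraph.pathGraph 2) :
    ∃ a b : V, a ≠ b ∧ c.supp = {a, b} ∧
      Finset.univ.filter (fun j => G.Adj a j) = {b} ∧
      Finset.univ.filter (fun j => G.Adj b j) = {a} := by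
  have hcard : Fintype.card c.supp = 2 := card_supp_of_iso G c e
  set a' : c.supp := e.symm 0 with ha'
  set b' : c.supp := e.symm 1 with hb'
  have hadj : G.Adj a' b' := by
    have : (G.induce c.supp).Adj (e.symm 0) (e.symm 1) := by
      rw [e.symm.map_adj_iff, SimpleGraph.pathGraph_adj]
      left; rfl
    simpa [SimpleGraph.comap_adj] using this
  have hne : (a' : V) ≠ (b' : V) := hadj.ne
  have hsupp : c.supp = {(a' : V), (b' : V)} := by
    apply Set.eq_of_subset_of_ncard_le
    · intro w hw
      have : e ⟨w, hw⟩ = 0 ∨ e ⟨w, hw⟩ = 1 := by omega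
      rcases this with h | h
      · left
        exact congrArg Subtype.val ((Equiv.eq_symm_apply e.toEquiv).mpr h)
      · right
        exact congrArg Subtype.val ((Equiv.eq_symm_apply e.toEquiv).mpr h)
    · rw [Set.ncard_pair hne, Set.ncard_eq_toFinset_card', Set.toFinset_card, hcard]
    · exact Set.toFinite _
  refine ⟨a', b', hne, hsupp, ?_, ?_⟩
  · refine filter_adj_eq G c a'.2 {(b' : V)} (by simpa using hadj) ?_
    intro u hu hadju
    rw [hsupp] at hu
    rcases hu with h | h
    · exact absurd hadju (h ▸ G.irrefl)
    · simpa using h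
  · refine filter_adj_eq G c b'.2 {(a' : V)} (by simpa using hadj.symm) ?_
    intro u hu hadju
    rw [hsupp] at hu
    rcases hu with h | h
    · simpa using h
    · exact absurd hadju (h ▸ G.irrefl)

lemma path3_struct (c : G.ConnectedComponent)
    (e : G.induce c.supp ≃g SimpleGraph.pathGraph 3) :
    ∃ a b z : V, a ≠ b ∧ a ≠ z ∧ b ≠ z ∧ c.supp = {a, b, z} ∧
      Finset.univ.filter (fun j => G.Adj a j) = {b} ∧
      Finset.univ.filter (fun j => G.Adj b j) = {a, z} ∧
      Finset.univ.filter (fun j => G.Adj z j) = {b} := by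
  have hcard : Fintype.card c.supp = 3 := card_supp_of_iso G c e
  set a' : c.supp := e.symm 0 with ha'
  set b' : c.supp := e.symm 1 with hb'
  set z' : c.supp := e.symm 2 with hz'
  have hiff : ∀ u v : Fin 3, G.Adj (e.symm u) (e.symm v) ↔ (SimpleGraph.pathGraph 3).Adj u v := by
    intro u v
    rw [← e.symm.map_adj_iff]
    simp [SimpleGraph.comap_adj]
  have hab : G.Adj a' b' := (hiff 0 1).mpr (by rw [SimpleGraph.pathGraph_adj]; left; rfl)
  have hbz : G.Adj b' z' := (hiff 1 2).mpr (by rw [SimpleGraph.pathGraph_adj]; left; rfl)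
  have haz : ¬ G.Adj (a' : V) (z' : V) := fun h => by
    have := (hiff 0 2).mp h
    rw [SimpleGraph.pathGraph_adj] at this
    omega
  have hne_az : (a' : V) ≠ (z' : V) := by
    intro h
    have : a' = z' := Subtype.ext h
    have : (0 : Fin 3) = 2 := e.toEquiv.symm.injective this
    omega
  have hsupp : c.supp = {(a' : V), (b' : V), (z' : V)} := by
    apply Set.eq_of_subset_of_ncard_le
    · intro w hw
      have : e ⟨w, hw⟩ = 0 ∨ e ⟨w, hw⟩ = 1 ∨ e ⟨w, hw⟩ = 2 := by omega
      rcases this with h | h | h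
      · exact Or.inl (congrArg Subtype.val ((Equiv.eq_symm_apply e.toEquiv).mpr h))
      · exact Or.inr (Or.inl (congrArg Subtype.val ((Equiv.eq_symm_apply e.toEquiv).mpr h)))
      · exact Or.inr (Or.inr (congrArg Subtype.val ((Equiv.eq_symm_apply e.toEquiv).mpr h)))
    · have h1 : ({(a' : V), (b' : V), (z' : V)} : Set V).ncard ≤ 3 := by
        apply le_trans (Set.ncard_insert_le _ _)
        have := Set.ncard_insert_le (b' : V) ({(z' : V)} : Set V)
        simp only [Set.ncard_singleton] at this
        omega
      calc ({(a' : V), (b' : V), (z' : V)} : Set V).ncard ≤ 3 := h1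
        _ = c.supp.ncard := by
            rw [Set.ncard_eq_toFinset_card', Set.toFinset_card, hcard]
    · exact Set.toFinite _
  refine ⟨a', b', z', hab.ne, hne_az, hbz.ne, hsupp, ?_, ?_, ?_⟩
  · refine filter_adj_eq G c a'.2 {(b' : V)} (by simpa using hab) ?_
    intro u hu hadju
    rw [hsupp] at hu
    rcases hu with h | h | h
    · exact absurd hadju (h ▸ G.irrefl)
    · simpa using h
    · exact absurd (h ▸ hadju) haz
  · refine filter_adj_eq G c b'.2 {(a' : V), (z' : V)} ?_ ?_
    · intro u hu
      simp only [Finset.mem_insert, Finset.mem_singleton] at hu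
      rcases hu with rfl | rfl
      · exact hab.symm
      · exact hbz
    · intro u hu hadju
      rw [hsupp] at hu
      rcases hu with h | h | h
      · simp only [Finset.mem_insert, Finset.mem_singleton]; exact Or.inl h
      · exact absurd hadju (h ▸ G.irrefl)
      · simp only [Finset.mem_insert, Finset.mem_singleton]; exact Or.inr (by simpa using h)
  · refine filter_adj_eq G c z'.2 {(b' : V)} (by simpa using hbz.symm) ?_
    intro u hu hadju
    rw [hsupp] at hu
    rcases hu with h | h | h
    · exact absurd (h ▸ hadju) (fun hh => haz hh.symm)
    · simpa using h
    · exact absurd hadju (h ▸ G.irrefl)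

end Structure
noncomputable def sumLM (ι : Type*) [Fintype ι] : (ι → ℝ) →ₗ[ℝ] ℝ where
  toFun := fun g => ∑ t, g t
  map_add' := by intros; simp [Finset.sum_add_distrib]
  map_smul' := by intros; simp [Finset.mul_sum]

lemma finrank_ker_sumLM (ι : Type*) [Fintype ι] [Nonempty ι] :
    Module.finrank ℝ (LinearMap.ker (sumLM ι)) = Fintype.card ι - 1 := by
  have hsurj : Function.Surjective (sumLM ι) := by
    intro r
    refine ⟨Pi.single (Classical.arbitrary ι) r, ?_⟩
    simp [sumLM, Finset.sum_pi_single']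
  have h1 := LinearMap.finrank_range_add_finrank_ker (sumLM ι)
  rw [LinearMap.range_eq_top.mpr hsurj, finrank_top, Module.finrank_pi ℝ] at h1
  simp only [Module.finrank_self] at h1
  omega

lemma cherry_eqs {r s xa xb xz : ℝ} (hr : r ^ 2 = 2) (hrpos : 0 < r)
    (Ea : s + 2*r*xa - 2*xb = 0) (Eb : s + 2*r*xb - 2*(xa + xz) = 0)
    (Ez : s + 2*r*xz - 2*xb = 0) :
    s = 0 ∧ xz = xa ∧ xb = r * xa := by
  have hs2 : s * (2 + r) = 0 := by linear_combination Ea + r * Eb + Ez - 2 * xb * hr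
  have hs : s = 0 := by
    rcases mul_eq_zero.mp hs2 with h | h
    · exact h
    · nlinarith
  have hxz : xz = xa := by
    have h1 : 2 * r * (xa - xz) = 0 := by linear_combination Ea - Ez
    rcases mul_eq_zero.mp h1 with h | h
    · nlinarith
    · linarith
  refine ⟨hs, hxz, by rw [hs] at Ea; nlinarith⟩

lemma edge_eqs {r s xa xb : ℝ} (hr : r ^ 2 = 2) (hrpos : 0 < r)
    (Ea : s + 2*r*xa - 2*xb = 0) (Eb : s + 2*r*xb - 2*xa = 0) :
    xa = xb ∧ s + (2*r - 2) * xa = 0 := by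
  have h1 : (2*r + 2) * (xa - xb) = 0 := by linear_combination Ea - Eb
  have h2 : xa = xb := by
    rcases mul_eq_zero.mp h1 with h | h
    · nlinarith
    · linarith
  exact ⟨h2, by rw [← h2] at Ea; linarith⟩

set_option maxHeartbeats 2000000 in
theorem cherry_ub {n d : ℕ} (hd : 1 ≤ d) (G : SimpleGraph (Fin n)) (hCF : IsCherryForest G)
    (hrank : (seidel G + (1 + 2 * Real.sqrt 2) • (1 : Matrix (Fin n) (Fin n) ℝ)).rank ≤ d) :
    n ≤ max d (3 * (d - 1) / 2) := by
  have hr : Real.sqrt 2 ^ 2 = 2 := Real.sq_sqrt (by norm_num)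
  have hrpos : 0 < Real.sqrt 2 := Real.sqrt_pos.mpr (by norm_num)
  set r := Real.sqrt 2 with hrdef
  set M := seidel G + (1 + 2 * r) • (1 : Matrix (Fin n) (Fin n) ℝ) with hM
  set K := LinearMap.ker M.mulVecLin with hK
  -- kernel equations
  have hker : ∀ x ∈ K, ∀ i, (∑ j, x j) + (2 * r) * x i
      - 2 * ∑ j ∈ Finset.univ.filter (fun j => G.Adj i j), x j = 0 := by
    intro x hx i
    have h0 : M *ᵥ x = 0 := by rw [← M.mulVecLin_apply]; exact LinearMap.mem_ker.mp hx
    have h1 := congrFun h0 i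
    rw [hM, seidel_mulVec, show (1 + 2 * r) - 1 = 2 * r by ring] at h1
    exact h1
  -- fibers
  set fib : G.ConnectedComponent → Finset (Fin n) :=
    fun c => Finset.univ.filter (fun v => G.connectedComponentMk v = c) with hfib
  have hfib_card : ∀ c, (fib c).card = Fintype.card c.supp := by
    intro c
    have h1 : fib c = c.supp.toFinset := by
      ext v; simp [hfib, SimpleGraph.ConnectedComponent.mem_supp_iff]
    rw [h1, Set.toFinset_card]
  have hfib_total : ∑ c, (fib c).card = n := by
    have h1 := Finset.card_eq_sum_card_fiberwise
      (f := G.connectedComponentMk) (s := Finset.univ) (t := Finset.univ)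
      (fun v _ => Finset.mem_univ _)
    rw [Finset.card_univ, Fintype.card_fin] at h1
    exact h1.symm
  set C3 := Finset.univ.filter (fun c : G.ConnectedComponent => Fintype.card c.supp = 3) with hC3
  set k := C3.card with hk
  have h3k : 3 * k ≤ n := by
    rw [← hfib_total]
    calc 3 * k = ∑ _c ∈ C3, 3 := by rw [Finset.sum_const, smul_eq_mul, mul_comm]
    _ = ∑ c ∈ C3, (fib c).card := Finset.sum_congr rfl (fun c hc => by
        rw [hfib_card]; exact ((Finset.mem_filter.mp hc).2).symm)
    _ ≤ ∑ c, (fib c).card := Finset.sum_le_sum_of_subset (Finset.subset_univ _)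
  -- cherry components
  have hcherry : ∀ c : G.ConnectedComponent, Fintype.card c.supp = 3 →
      ∃ a b z : Fin n, a ≠ b ∧ a ≠ z ∧ b ≠ z ∧ fib c = {a, b, z} ∧
        (∀ x ∈ K, (∑ j, x j) = 0 ∧ x z = x a ∧ x b = r * x a) := by
    intro c h3
    rcases hCF c with ⟨⟨e⟩⟩ | ⟨⟨e⟩⟩ | ⟨⟨e⟩⟩
    · have := card_supp_of_iso G c e; omega
    · have := card_supp_of_iso G c e; omega
    · obtain ⟨a, b, z, hab, haz, hbz, hsupp, hfa, hfb, hfz⟩ := path3_struct G c e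
      refine ⟨a, b, z, hab, haz, hbz, ?_, ?_⟩
      · ext v
        simp only [hfib, Finset.mem_filter, Finset.mem_univ, true_and]
        rw [← SimpleGraph.ConnectedComponent.mem_supp_iff, hsupp]
        simp
      · intro x hx
        have Ea := hker x hx a; rw [hfa, Finset.sum_singleton] at Ea
        have Eb := hker x hx b
        rw [hfb, Finset.sum_insert (by simpa using haz), Finset.sum_singleton] at Eb
        have Ez := hker x hx z; rw [hfz, Finset.sum_singleton] at Ez
        exact cherry_eqs hr hrpos (by linarith) (by linarith) (by linarith)
  -- non-cherry vertices vanish when total sum is zero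
  have hv12 : ∀ x ∈ K, (∑ j, x j) = 0 → ∀ v : Fin n,
      Fintype.card (G.connectedComponentMk v).supp ≠ 3 → x v = 0 := by
    intro x hx hs v h3
    have hv : v ∈ (G.connectedComponentMk v).supp :=
      (SimpleGraph.ConnectedComponent.mem_supp_iff _ _).mpr rfl
    rcases hCF (G.connectedComponentMk v) with ⟨⟨e⟩⟩ | ⟨⟨e⟩⟩ | ⟨⟨e⟩⟩
    · obtain ⟨a, hsupp, hfa⟩ := path1_struct G _ e
      have hva : v = a := by rw [hsupp] at hv; exact hv
      have E := hker x hx v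
      rw [hva, hfa, Finset.sum_empty, hs] at E
      have : 2 * r * x a = 0 := by linarith
      rcases mul_eq_zero.mp this with h | h
      · nlinarith
      · rw [hva]; exact h
    · obtain ⟨a, b, hne, hsupp, hfa, hfb⟩ := path2_struct G _ e
      have Ea := hker x hx a; rw [hfa, Finset.sum_singleton, hs] at Ea
      have Eb := hker x hx b; rw [hfb, Finset.sum_singleton, hs] at Eb
      obtain ⟨hxab, hE⟩ := edge_eqs (s := 0) (xa := x a) (xb := x b) hr hrpos (by linarith) (by linarith)
      have hxa : x a = 0 := by
        have h2 : (2 * r - 2) * x a = 0 := by linarith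
        rcases mul_eq_zero.mp h2 with h | h
        · nlinarith
        · exact h
      rw [hsupp] at hv
      rcases hv with h | h
      · rw [h]; exact hxa
      · rw [h, ← hxab]; exact hxa
    · have := card_supp_of_iso G _ e; omega
  -- rank-nullity
  have hrk : M.rank = Module.finrank ℝ (LinearMap.range M.mulVecLin) := rfl
  have hrn : M.rank + Module.finrank ℝ K = n := by
    have h1 := LinearMap.finrank_range_add_finrank_ker M.mulVecLin
    rw [Module.finrank_pi ℝ, Fintype.card_fin] at h1
    rw [hrk, hK]
    exact h1
  by_cases hk0 : k = 0
  · -- no cherries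
    have hall : ∀ c : G.ConnectedComponent, Fintype.card c.supp ≠ 3 := by
      intro c hc
      have hc3 : c ∈ C3 := Finset.mem_filter.mpr ⟨Finset.mem_univ _, hc⟩
      have : C3 = ∅ := Finset.card_eq_zero.mp hk0
      rw [this] at hc3
      exact absurd hc3 (Finset.notMem_empty c)
    have hKbot : K = ⊥ := by
      rw [eq_bot_iff]
      intro x hx
      have hvt : ∀ v : Fin n, ∃ t : ℝ, 0 < t ∧ (∑ j, x j) + t * x v = 0 := by
        intro v
        have hv : v ∈ (G.connectedComponentMk v).supp :=
          (SimpleGraph.ConnectedComponent.mem_supp_iff _ _).mpr rfl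
        rcases hCF (G.connectedComponentMk v) with ⟨⟨e⟩⟩ | ⟨⟨e⟩⟩ | ⟨⟨e⟩⟩
        · obtain ⟨a, hsupp, hfa⟩ := path1_struct G _ e
          have hva : v = a := by rw [hsupp] at hv; exact hv
          have E := hker x hx v
          rw [hva, hfa, Finset.sum_empty] at E
          exact ⟨2 * r, by nlinarith, by rw [hva]; linarith⟩
        · obtain ⟨a, b, hne, hsupp, hfa, hfb⟩ := path2_struct G _ e
          have Ea := hker x hx a; rw [hfa, Finset.sum_singleton] at Ea
          have Eb := hker x hx b; rw [hfb, Finset.sum_singleton] at Eb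
          obtain ⟨hxab, hE⟩ := edge_eqs (s := ∑ j, x j) (xa := x a) (xb := x b)
            hr hrpos (by linarith) (by linarith)
          have hr1 : 1 < r := by nlinarith
          rw [hsupp] at hv
          rcases hv with h | h
          · exact ⟨2 * r - 2, by linarith, by rw [h]; linarith⟩
          · exact ⟨2 * r - 2, by linarith, by rw [h, ← hxab]; linarith⟩
        · exact absurd (card_supp_of_iso G _ e) (hall _)
      have hs : (∑ j, x j) = 0 := by
        by_contra hs
        rcases Nat.eq_zero_or_pos n with hn | hn
        · apply hs; subst hn; simp
        have hterm : ∀ v : Fin n, (∑ j, x j) * x v < 0 := by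
          intro v
          obtain ⟨t, ht, hE⟩ := hvt v
          have hxv : x v = -(∑ j, x j) / t := by field_simp; linarith
          rw [hxv]
          have hss : 0 < (∑ j, x j) ^ 2 := by positivity
          have h2 : (∑ j, x j) * (-(∑ j, x j) / t) = -((∑ j, x j) ^ 2 / t) := by ring
          rw [h2]
          have h3 : 0 < (∑ j, x j) ^ 2 / t := div_pos hss ht
          linarith
        have hsum : (∑ j, x j) * (∑ j, x j) = ∑ v, (∑ j, x j) * x v := by
          rw [← Finset.mul_sum]
        have hne : (Finset.univ : Finset (Fin n)).Nonempty :=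
          Finset.univ_nonempty_iff.mpr ⟨⟨0, hn⟩⟩
        have hneg : ∑ v, (∑ j, x j) * x v < 0 := Finset.sum_neg (fun v _ => hterm v) hne
        nlinarith [hsum, hneg]
      rw [Submodule.mem_bot]
      funext v
      obtain ⟨t, ht, hE⟩ := hvt v
      rw [hs] at hE
      have : t * x v = 0 := by linarith
      rcases mul_eq_zero.mp this with h | h
      · exact absurd h (ne_of_gt ht)
      · exact h
    have hf0 : Module.finrank ℝ K = 0 := by rw [hKbot]; exact finrank_bot ℝ _
    have hnd : n ≤ d := by omega
    exact le_trans hnd (le_max_left _ _)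
  · -- at least one cherry
    have hk1 : 1 ≤ k := Nat.pos_of_ne_zero hk0
    obtain ⟨c0, hc0⟩ : ∃ c, c ∈ C3 := Finset.card_pos.mp hk1
    have hs0 : ∀ x ∈ K, (∑ j, x j) = 0 := by
      intro x hx
      obtain ⟨a, b, z, _, _, _, _, hfacts⟩ := hcherry c0 (Finset.mem_filter.mp hc0).2
      exact (hfacts x hx).1
    haveI : Nonempty {c : G.ConnectedComponent // c ∈ C3} := ⟨⟨c0, hc0⟩⟩
    have hcι : Fintype.card {c : G.ConnectedComponent // c ∈ C3} = k := Fintype.card_coe _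
    set Φ : (Fin n → ℝ) →ₗ[ℝ] ({c : G.ConnectedComponent // c ∈ C3} → ℝ) :=
      { toFun := fun x c => ∑ v ∈ fib c.1, x v,
        map_add' := by intros; funext c; simp [Finset.sum_add_distrib],
        map_smul' := by intros; funext c; simp [Finset.mul_sum] } with hΦ
    have hfib0 : ∀ x ∈ K, ∀ c : G.ConnectedComponent, c ∉ C3 → ∑ v ∈ fib c, x v = 0 := by
      intro x hx c hc
      apply Finset.sum_eq_zero
      intro v hv
      have hmk : G.connectedComponentMk v = c := by
        simpa [hfib] using hv
      apply hv12 x hx (hs0 x hx) v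
      rw [hmk]
      intro h3
      exact hc (Finset.mem_filter.mpr ⟨Finset.mem_univ _, h3⟩)
    have hplane : ∀ x ∈ K, ∑ c : {c : G.ConnectedComponent // c ∈ C3}, Φ x c = 0 := by
      intro x hx
      have h1 : ∑ c : {c : G.ConnectedComponent // c ∈ C3}, Φ x c
          = ∑ c ∈ C3, ∑ v ∈ fib c, x v := by
        rw [hΦ]
        exact Finset.sum_coe_sort C3 (fun c => ∑ v ∈ fib c, x v)
      rw [h1, Finset.sum_subset (Finset.subset_univ C3)
        (fun c _ hc => hfib0 x hx c hc)]
      have h2 : ∑ c : G.ConnectedComponent, ∑ v ∈ fib c, x v = ∑ v, x v :=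
        Finset.sum_fiberwise Finset.univ G.connectedComponentMk x
      rw [h2]
      exact hs0 x hx
    have hinj : ∀ x ∈ K, (∀ c : {c : G.ConnectedComponent // c ∈ C3}, Φ x c = 0) → x = 0 := by
      intro x hx h0
      funext v
      show x v = 0
      by_cases h3 : Fintype.card (G.connectedComponentMk v).supp = 3
      · obtain ⟨a, b, z, hab, haz, hbz, hfibeq, hfacts⟩ := hcherry _ h3
        obtain ⟨hs, hza, hba⟩ := hfacts x hx
        have hc3 : G.connectedComponentMk v ∈ C3 := Finset.mem_filter.mpr ⟨Finset.mem_univ _, h3⟩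
        have h00 := h0 ⟨_, hc3⟩
        have h01 : ∑ u ∈ fib (G.connectedComponentMk v), x u = 0 := h00
        rw [hfibeq, Finset.sum_insert (by simp [hab, haz]),
          Finset.sum_insert (by simp [hbz]), Finset.sum_singleton] at h01
        have hxa : x a = 0 := by
          rw [hba, hza] at h01
          have h02 : (2 + r) * x a = 0 := by linarith
          rcases mul_eq_zero.mp h02 with h | h
          · nlinarith
          · exact h
        have hvmem : v ∈ fib (G.connectedComponentMk v) := Finset.mem_filter.mpr ⟨Finset.mem_univ _, rfl⟩
        rw [hfibeq] at hvmem
        simp only [Finset.mem_insert, Finset.mem_singleton] at hvmem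
        rcases hvmem with h | h | h
        · rw [h]; exact hxa
        · rw [h, hba, hxa]; ring
        · rw [h, hza]; exact hxa
      · exact hv12 x hx (hs0 x hx) v h3
    have hcomp : ∀ x : K, (sumLM {c : G.ConnectedComponent // c ∈ C3}) (Φ x.1) = 0 :=
      fun x => hplane x.1 x.2
    set ψ : K →ₗ[ℝ] (LinearMap.ker (sumLM {c : G.ConnectedComponent // c ∈ C3})) :=
      LinearMap.codRestrict _ (Φ.comp K.subtype)
        (fun x => LinearMap.mem_ker.mpr (hcomp x)) with hψ
    have hψinj : Function.Injective ψ := by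
      rw [← LinearMap.ker_eq_bot, eq_bot_iff]
      intro y hy
      rw [Submodule.mem_bot]
      rw [LinearMap.mem_ker] at hy
      have h1 : Φ y.1 = 0 := congrArg Subtype.val hy
      have h2 : y.1 = 0 := hinj y.1 y.2 (fun c => congrFun h1 c)
      exact Subtype.ext h2
    have hle : Module.finrank ℝ K ≤ k - 1 := by
      have h1 := LinearMap.finrank_le_finrank_of_injective hψinj
      rwa [finrank_ker_sumLM _, hcι] at h1
    have hfin : n ≤ 3 * (d - 1) / 2 := by omega
    exact le_trans hfin (le_max_right _ _)

lemma iso_path1_of {V : Type*} (G : SimpleGraph V) (s : Set V) (a : V) (hs : s = {a}) :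
    Nonempty (G.induce s ≃g SimpleGraph.pathGraph 1) := by
  subst hs
  refine ⟨⟨⟨fun _ => 0, fun _ => ⟨a, rfl⟩, ?_, ?_⟩, ?_⟩⟩
  · intro u
    apply Subtype.ext
    exact (u.2 : u.1 ∈ ({a} : Set V)).symm ▸ rfl
  · intro i
    exact Subsingleton.elim _ _
  · intro u v
    constructor
    · intro h
      exact absurd (Subsingleton.elim (α := Fin 1) 0 0) (by simpa using h.ne)
    · intro h
      have hu : u.1 = a := u.2
      have hv : v.1 = a := v.2
      have : u.1 = v.1 := by rw [hu, hv]
      exact absurd (Subtype.ext this) h.ne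

lemma iso_path3_of {V : Type*} [DecidableEq V] (G : SimpleGraph V) (s : Set V) (a b z : V)
    (hab : G.Adj a b) (hbz : G.Adj b z) (haz : ¬ G.Adj a z) (hazne : a ≠ z)
    (hs : s = {a, b, z}) : Nonempty (G.induce s ≃g SimpleGraph.pathGraph 3) := by
  subst hs
  have hane : a ≠ b := hab.ne
  have hbne : b ≠ z := hbz.ne
  have hma : a ∈ ({a, b, z} : Set V) := by simp
  have hmb : b ∈ ({a, b, z} : Set V) := by simp
  have hmz : z ∈ ({a, b, z} : Set V) := by simp
  have hza : ¬ G.Adj z a := fun h => haz h.symm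
  let f : ({a, b, z} : Set V) → Fin 3 := fun u => if u.1 = a then 0 else if u.1 = b then 1 else 2
  let g : Fin 3 → ({a, b, z} : Set V) := fun i =>
    if i = 0 then ⟨a, hma⟩ else if i = 1 then ⟨b, hmb⟩ else ⟨z, hmz⟩
  have hcases : ∀ u : ({a, b, z} : Set V), u.1 = a ∨ u.1 = b ∨ u.1 = z := fun u => u.2
  have hind : ∀ u v : ({a, b, z} : Set V),
      (G.induce ({a, b, z} : Set V)).Adj u v ↔ G.Adj u.1 v.1 := fun u v => Iff.rfl
  refine ⟨⟨⟨f, g, ?_, ?_⟩, ?_⟩⟩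
  · intro u
    apply Subtype.ext
    rcases hcases u with h | h | h <;>
      simp [f, g, h, Ne.symm hane, Ne.symm hazne, Ne.symm hbne]
  · intro i
    fin_cases i <;> simp [f, g, Ne.symm hane, Ne.symm hazne, Ne.symm hbne]
  · intro u v
    rw [Equiv.coe_fn_mk, hind]
    rcases hcases u with h1 | h1 | h1 <;> rcases hcases v with h2 | h2 | h2 <;>
      simp [f, h1, h2, Ne.symm hane, Ne.symm hazne, Ne.symm hbne,
        SimpleGraph.pathGraph_adj, hab, hbz, haz, hza, hab.symm, hbz.symm, hane, hazne, hbne,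
        G.irrefl]

lemma sum_range_triple (f : ℕ → ℝ) (k : ℕ) :
    ∑ i ∈ Finset.range (3 * k), f i
      = ∑ t ∈ Finset.range k, (f (3 * t) + f (3 * t + 1) + f (3 * t + 2)) := by
  induction k with
  | zero => simp
  | succ k ih =>
    rw [show 3 * (k + 1) = 3 * k + 1 + 1 + 1 by ring, Finset.sum_range_succ,
      Finset.sum_range_succ, Finset.sum_range_succ, ih, Finset.sum_range_succ]
    ring

section Construction

variable (k R n : ℕ)

/-- the cherry-forest graph: `k` paths on 3 consecutive vertices, rest isolated. -/
def cherryG : SimpleGraph (Fin n) :=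
  SimpleGraph.fromRel (fun i j => i.val < 3 * k ∧ j.val < 3 * k ∧
    i.val / 3 = j.val / 3 ∧ i.val + 1 = j.val)

lemma cherryG_adj {i j : Fin n} : (cherryG k n).Adj i j ↔
    i.val < 3 * k ∧ j.val < 3 * k ∧ i.val / 3 = j.val / 3 ∧
      (i.val + 1 = j.val ∨ j.val + 1 = i.val) := by
  rw [cherryG, SimpleGraph.fromRel_adj]
  constructor
  · rintro ⟨hne, h | h⟩ <;> exact ⟨by omega, by omega, by omega, by omega⟩
  · rintro ⟨h1, h2, h3, h4⟩
    have : i.val ≠ j.val := by omega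
    exact ⟨fun he => this (congrArg Fin.val he), by omega⟩

lemma cherryG_mk_eq (hkn : 3 * k ≤ n) {u v : Fin n} :
    (cherryG k n).connectedComponentMk u = (cherryG k n).connectedComponentMk v ↔
      (u = v ∨ (u.val < 3 * k ∧ v.val < 3 * k ∧ u.val / 3 = v.val / 3)) := by
  rw [SimpleGraph.ConnectedComponent.eq]
  constructor
  · intro h
    obtain ⟨w⟩ := h
    induction w with
    | nil => exact Or.inl rfl
    | @cons x y zz h p ih =>
      rw [cherryG_adj] at h
      rcases ih with h' | h'
      · subst h'
        right
        refine ⟨h.1, h.2.1, h.2.2.1⟩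
      · right
        refine ⟨h.1, h'.2.1, by omega⟩
  · intro h
    rcases h with rfl | ⟨h1, h2, h3⟩
    · exact SimpleGraph.Reachable.refl u
    · set t := u.val / 3 with ht
      have htk : t < k := by omega
      have hm : 3 * t + 1 < n := by omega
      set m : Fin n := ⟨3 * t + 1, by omega⟩ with hmdef
      have hadj : ∀ (p q : ℕ) (hp : p < n) (hq : q < n), p < 3 * k → q < 3 * k →
          p / 3 = q / 3 → p + 1 = q → (cherryG k n).Adj ⟨p, hp⟩ ⟨q, hq⟩ := by
        intro p q hp hq h1 h2 h3 h4
        rw [cherryG_adj]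
        exact ⟨h1, h2, h3, Or.inl h4⟩
      have key : ∀ w : Fin n, w.val < 3 * k → w.val / 3 = t → (cherryG k n).Reachable w m := by
        intro w hw hwt
        have h3w : w.val = 3 * t ∨ w.val = 3 * t + 1 ∨ w.val = 3 * t + 2 := by omega
        rcases h3w with h | h | h
        · have hwe : w = ⟨3 * t, by omega⟩ := Fin.ext h
          rw [hwe]
          exact (hadj (3 * t) (3 * t + 1) (by omega) (by omega) (by omega) (by omega)
            (by omega) (by omega)).reachable
        · have hwe : w = m := Fin.ext h
          rw [hwe]
        · have hwe : w = ⟨3 * t + 2, by omega⟩ := Fin.ext h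
          rw [hwe]
          exact ((hadj (3 * t + 1) (3 * t + 2) (by omega) (by omega) (by omega) (by omega)
            (by omega) (by omega)).reachable).symm
      exact (key u h1 rfl).trans (key v h2 (by omega)).symm

end Construction

lemma cherryG_isCherryForest (k n : ℕ) (hkn : 3 * k ≤ n) : IsCherryForest (cherryG k n) := by
  intro c
  refine SimpleGraph.ConnectedComponent.ind ?_ c
  intro v
  by_cases hv : v.val < 3 * k
  · right; right
    set t := v.val / 3 with ht
    have h0 : 3 * t < n := by omega
    have h1 : 3 * t + 1 < n := by omega
    have h2 : 3 * t + 2 < n := by omega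
    have hv0 : ((⟨3 * t, h0⟩ : Fin n)).val = 3 * t := rfl
    have hv1 : ((⟨3 * t + 1, h1⟩ : Fin n)).val = 3 * t + 1 := rfl
    have hv2 : ((⟨3 * t + 2, h2⟩ : Fin n)).val = 3 * t + 2 := rfl
    refine iso_path3_of _ _ ⟨3 * t, h0⟩ ⟨3 * t + 1, h1⟩ ⟨3 * t + 2, h2⟩ ?_ ?_ ?_ ?_ ?_
    · rw [cherryG_adj]; exact ⟨by omega, by omega, by omega, Or.inl (by omega)⟩
    · rw [cherryG_adj]; exact ⟨by omega, by omega, by omega, Or.inl (by omega)⟩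
    · rw [cherryG_adj]
      rintro ⟨-, -, -, h4⟩
      rw [hv0, hv2] at h4
      omega
    · intro h
      have := congrArg Fin.val h
      rw [hv0, hv2] at this
      omega
    · ext w
      rw [SimpleGraph.ConnectedComponent.mem_supp_iff, cherryG_mk_eq k n hkn]
      simp only [Set.mem_insert_iff, Set.mem_singleton_iff, Fin.ext_iff, hv0, hv1, hv2]
      omega
  · left
    refine iso_path1_of _ _ v ?_
    ext w
    rw [SimpleGraph.ConnectedComponent.mem_supp_iff, cherryG_mk_eq k n hkn]
    simp only [Set.mem_singleton_iff, Fin.ext_iff]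
    omega

set_option maxHeartbeats 1000000 in
lemma cherryG_rank_le (k R n : ℕ) (hk : 1 ≤ k) (hR : R ≤ 1) (hn : n = 3 * k + R) :
    (seidel (cherryG k n) + (1 + 2 * Real.sqrt 2) • (1 : Matrix (Fin n) (Fin n) ℝ)).rank
      ≤ 2 * k + R + 1 := by
  have hr : Real.sqrt 2 ^ 2 = 2 := Real.sq_sqrt (by norm_num)
  have hrpos : 0 < Real.sqrt 2 := Real.sqrt_pos.mpr (by norm_num)
  set r := Real.sqrt 2 with hrdef
  set M := seidel (cherryG k n) + (1 + 2 * r) • (1 : Matrix (Fin n) (Fin n) ℝ) with hM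
  set K := LinearMap.ker M.mulVecLin with hK
  set L : (Fin k → ℝ) →ₗ[ℝ] (Fin n → ℝ) :=
    { toFun := fun g v => if h : v.val < 3 * k then
        (if v.val % 3 = 1 then r else 1) * g ⟨v.val / 3, by omega⟩ else 0,
      map_add' := by
        intro g1 g2; funext v
        by_cases h : v.val < 3 * k <;> simp [h, mul_add]
      map_smul' := by
        intro a g; funext v
        by_cases h : v.val < 3 * k <;> simp [h] <;> ring } with hL
  have hLval : ∀ (g : Fin k → ℝ) (v : Fin n), L g v = if h : v.val < 3 * k then
      (if v.val % 3 = 1 then r else 1) * g ⟨v.val / 3, by omega⟩ else 0 := fun _ _ => rfl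
  have hgcongr : ∀ (g : Fin k → ℝ) (p q : ℕ) (hp : p < k) (hq : q < k), p = q →
      g ⟨p, hp⟩ = g ⟨q, hq⟩ := by
    intro g p q hp hq h; subst h; rfl
  -- total sum
  have hsum : ∀ g : Fin k → ℝ, ∑ v, L g v = (2 + r) * ∑ t, g t := by
    intro g
    set g' : ℕ → ℝ := fun t => if h : t < k then g ⟨t, h⟩ else 0 with hg'
    set F : ℕ → ℝ := fun i => if i < 3 * k then (if i % 3 = 1 then r else 1) * g' (i / 3) else 0
      with hF
    have step1 : ∀ v : Fin n, L g v = F v.val := by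
      intro v
      rw [hLval]
      by_cases h : v.val < 3 * k
      · rw [dif_pos h, hF]
        simp only [if_pos h, hg']
        rw [dif_pos (by omega : v.val / 3 < k)]
      · rw [dif_neg h, hF]; simp [h]
    calc ∑ v, L g v = ∑ v : Fin n, F v.val := Finset.sum_congr rfl (fun v _ => step1 v)
      _ = ∑ i ∈ Finset.range n, F i := Fin.sum_univ_eq_sum_range F n
      _ = ∑ i ∈ Finset.range (3 * k), F i := by
          refine (Finset.sum_subset (Finset.range_subset_range.mpr (by omega)) ?_).symm
          intro i _ hi
          rw [Finset.mem_range] at hi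
          rw [hF]; simp [hi]
      _ = ∑ t ∈ Finset.range k, (F (3 * t) + F (3 * t + 1) + F (3 * t + 2)) :=
          sum_range_triple F k
      _ = ∑ t ∈ Finset.range k, (2 + r) * g' t := by
          refine Finset.sum_congr rfl ?_
          intro t htk
          rw [Finset.mem_range] at htk
          rw [hF]
          simp only [if_pos (by omega : 3 * t < 3 * k), if_pos (by omega : 3 * t + 1 < 3 * k),
            if_pos (by omega : 3 * t + 2 < 3 * k)]
          rw [if_neg (by omega : ¬ (3 * t) % 3 = 1), if_pos (by omega : (3 * t + 1) % 3 = 1),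
            if_neg (by omega : ¬ (3 * t + 2) % 3 = 1)]
          rw [show (3 * t) / 3 = t by omega, show (3 * t + 1) / 3 = t by omega,
            show (3 * t + 2) / 3 = t by omega]
          ring
      _ = (2 + r) * ∑ t ∈ Finset.range k, g' t := by rw [Finset.mul_sum]
      _ = (2 + r) * ∑ t, g t := by
          congr 1
          rw [← Fin.sum_univ_eq_sum_range g' k]
          refine Finset.sum_congr rfl ?_
          intro t _
          rw [hg']
          simp [t.isLt]
  -- kernel membership
  have hker0 : ∀ g : Fin k → ℝ, (∑ t, g t) = 0 → M *ᵥ (L g) = 0 := by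
    intro g hg
    funext i
    rw [hM, seidel_mulVec, hsum, hg, mul_zero, show (1 + 2 * r) - 1 = 2 * r by ring]
    show 0 + 2 * r * L g i - 2 * ∑ j ∈ Finset.univ.filter (fun j => (cherryG k n).Adj i j), L g j
      = 0
    by_cases hvi : i.val < 3 * k
    · have hdiv : i.val / 3 < k := by omega
      rcases (by omega : i.val % 3 = 0 ∨ i.val % 3 = 1 ∨ i.val % 3 = 2) with h3 | h3 | h3
      · -- left end: single neighbour i+1
        have hlt : i.val + 1 < n := by omega
        have hfil : Finset.univ.filter (fun j => (cherryG k n).Adj i j) = {⟨i.val + 1, hlt⟩} := by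
          ext j
          simp only [Finset.mem_filter, Finset.mem_univ, true_and, Finset.mem_singleton,
            cherryG_adj, Fin.ext_iff]
          show _ ↔ j.val = i.val + 1
          omega
        rw [hfil, Finset.sum_singleton, hLval, hLval]
        simp only [Fin.val_mk]
        rw [dif_pos hvi, dif_pos (show (i.val + 1) < 3 * k by omega)]
        rw [if_neg (by omega), if_pos (by omega)]
        rw [hgcongr g ((i.val + 1) / 3) (i.val / 3) (by omega) hdiv (by omega)]
        ring
      · -- middle: two neighbours
        have hlt1 : i.val - 1 < n := by omega
        have hlt2 : i.val + 1 < n := by omega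
        have hne : (⟨i.val - 1, hlt1⟩ : Fin n) ≠ ⟨i.val + 1, hlt2⟩ := by
          intro h
          have := congrArg Fin.val h
          simp only [] at this
          omega
        have hfil : Finset.univ.filter (fun j => (cherryG k n).Adj i j)
            = {⟨i.val - 1, hlt1⟩, ⟨i.val + 1, hlt2⟩} := by
          ext j
          simp only [Finset.mem_filter, Finset.mem_univ, true_and, Finset.mem_insert,
            Finset.mem_singleton, cherryG_adj, Fin.ext_iff]
          show _ ↔ j.val = i.val - 1 ∨ j.val = i.val + 1
          omega
        rw [hfil, Finset.sum_insert (by simpa using hne), Finset.sum_singleton,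
          hLval, hLval, hLval]
        simp only [Fin.val_mk]
        rw [dif_pos hvi, dif_pos (show (i.val - 1) < 3 * k by omega),
          dif_pos (show (i.val + 1) < 3 * k by omega)]
        rw [if_pos (by omega), if_neg (by omega), if_neg (by omega)]
        rw [hgcongr g ((i.val - 1) / 3) (i.val / 3) (by omega) hdiv (by omega),
          hgcongr g ((i.val + 1) / 3) (i.val / 3) (by omega) hdiv (by omega)]
        set y := g ⟨i.val / 3, hdiv⟩
        linear_combination 2 * y * hr
      · -- right end: single neighbour i-1
        have hlt : i.val - 1 < n := by omega
        have hfil : Finset.univ.filter (fun j => (cherryG k n).Adj i j) = {⟨i.val - 1, hlt⟩} := by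
          ext j
          simp only [Finset.mem_filter, Finset.mem_univ, true_and, Finset.mem_singleton,
            cherryG_adj, Fin.ext_iff]
          show _ ↔ j.val = i.val - 1
          omega
        rw [hfil, Finset.sum_singleton, hLval, hLval]
        simp only [Fin.val_mk]
        rw [dif_pos hvi, dif_pos (show (i.val - 1) < 3 * k by omega)]
        rw [if_neg (by omega), if_pos (by omega)]
        rw [hgcongr g ((i.val - 1) / 3) (i.val / 3) (by omega) hdiv (by omega)]
        ring
    · -- isolated
      have hfil : Finset.univ.filter (fun j => (cherryG k n).Adj i j) = ∅ := by
        ext j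
        simp only [Finset.mem_filter, Finset.mem_univ, true_and, Finset.notMem_empty,
          iff_false, cherryG_adj]
        omega
      rw [hfil, Finset.sum_empty, hLval, dif_neg hvi]
      ring
  -- dimension bound
  haveI : Nonempty (Fin k) := ⟨⟨0, hk⟩⟩
  have hmem : ∀ y : LinearMap.ker (sumLM (Fin k)), L y.1 ∈ K := by
    intro y
    rw [hK, LinearMap.mem_ker, Matrix.mulVecLin_apply]
    exact hker0 y.1 (LinearMap.mem_ker.mp y.2)
  set ψ : LinearMap.ker (sumLM (Fin k)) →ₗ[ℝ] K :=
    LinearMap.codRestrict _ (L.comp (LinearMap.ker (sumLM (Fin k))).subtype)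
      (fun y => hmem y) with hψ
  have hψinj : Function.Injective ψ := by
    rw [← LinearMap.ker_eq_bot, eq_bot_iff]
    intro y hy
    rw [Submodule.mem_bot]
    rw [LinearMap.mem_ker] at hy
    have h1 : L y.1 = 0 := congrArg Subtype.val hy
    apply Subtype.ext
    funext t
    have h2 := congrFun h1 ⟨3 * t.val, by omega⟩
    rw [hLval] at h2
    simp only [Fin.val_mk] at h2
    rw [dif_pos (by omega : 3 * t.val < 3 * k), if_neg (by omega)] at h2
    have h3 := hgcongr y.1 ((3 * t.val) / 3) t.val (by omega) t.isLt (by omega)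
    rw [h3] at h2
    simpa using h2
  have hle : k - 1 ≤ Module.finrank ℝ K := by
    have h1 := LinearMap.finrank_le_finrank_of_injective hψinj
    rwa [finrank_ker_sumLM (Fin k), Fintype.card_fin] at h1
  have hrn : M.rank + Module.finrank ℝ K = n := by
    have h1 := LinearMap.finrank_range_add_finrank_ker M.mulVecLin
    rw [Module.finrank_pi ℝ, Fintype.card_fin] at h1
    exact h1
  omega

lemma bot_isCherryForest (m : ℕ) : IsCherryForest (⊥ : SimpleGraph (Fin m)) := by
  intro c
  refine SimpleGraph.ConnectedComponent.ind ?_ c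
  intro v
  left
  refine iso_path1_of _ _ v ?_
  ext w
  rw [SimpleGraph.ConnectedComponent.mem_supp_iff, SimpleGraph.ConnectedComponent.eq]
  simp [SimpleGraph.reachable_bot]

/-- for every positive integer `d`, the maximum order of a graph all of
whose components are isolated vertices, edges, or cherries with
`rank(S(G) + (1+2√2)I) ≤ d` is exactly `max(d, ⌊3(d-1)/2⌋)`. -/
theorem max_order_cherryForest (d : ℕ) (hd : 1 ≤ d) :
    IsGreatest {n : ℕ | ∃ G : SimpleGraph (Fin n), IsCherryForest G ∧
        (seidel G + (1 + 2 * Real.sqrt 2) • (1 : Matrix (Fin n) (Fin n) ℝ)).rank ≤ d}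
      (max d (3 * (d - 1) / 2)) := by
  constructor
  · by_cases h : 3 * (d - 1) / 2 ≤ d
    · rw [max_eq_left h]
      exact ⟨⊥, bot_isCherryForest d, (Matrix.rank_le_width _)⟩
    · rw [max_eq_right (le_of_not_ge h)]
      set k := (d - 1) / 2 with hk
      set R := (d - 1) % 2 with hR
      have hk1 : 1 ≤ k := by omega
      have hR1 : R ≤ 1 := by omega
      have hn : 3 * (d - 1) / 2 = 3 * k + R := by omega
      refine ⟨cherryG k _, cherryG_isCherryForest k _ (by omega), ?_⟩
      have h2 := cherryG_rank_le k R (3 * (d - 1) / 2) hk1 hR1 hn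
      have hd2 : 2 * k + R + 1 = d := by omega
      omega
  · rintro n ⟨G, h1, h2⟩
    exact cherry_ub hd G h1 h2
end

section
/- Real numbers x₁, …, x_n are all nonnegative if and only if every elementary symmetric polynomial e_k(x₁, …, x_n), for 1 ≤ k ≤ n, is nonnegative. -/
/-- real numbers `x₁, …, xₙ` are all nonnegative iff every elementary
symmetric function `e_k(x₁, …, xₙ)`, `1 ≤ k ≤ n`, is nonnegative. -/
theorem nonneg_iff_esymm_nonneg {n : ℕ} (x : Fin n → ℝ) :
    (∀ i, 0 ≤ x i) ↔
      ∀ k, 1 ≤ k → k ≤ n →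
        0 ≤ ∑ s ∈ Finset.powersetCard k (Finset.univ : Finset (Fin n)), ∏ i ∈ s, x i := by
  constructor
  · intro hx k _ _
    exact Finset.sum_nonneg fun s _ => Finset.prod_nonneg fun i _ => hx i
  · intro he i
    by_contra hxi
    push_neg at hxi
    set t : ℝ := -x i with ht
    have ht0 : 0 < t := by simp only [ht]; linarith
    have hzero : ∏ j, (x j + t) = 0 :=
      Finset.prod_eq_zero (Finset.mem_univ i) (by simp [ht])
    have hexp : ∏ j, (x j + t) =
        ∑ s ∈ (Finset.univ : Finset (Fin n)).powerset,
          (∏ j ∈ s, x j) * t ^ (n - s.card) := by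
      rw [Finset.prod_add]
      refine Finset.sum_congr rfl fun s hs => ?_
      rw [Finset.prod_const]
      congr 1
      rw [Finset.card_sdiff_of_subset (Finset.mem_powerset.mp hs), Finset.card_univ, Fintype.card_fin]
    have hfib : ∑ s ∈ (Finset.univ : Finset (Fin n)).powerset,
          (∏ j ∈ s, x j) * t ^ (n - s.card) =
        ∑ k ∈ Finset.range (n + 1),
          (∑ s ∈ Finset.powersetCard k (Finset.univ : Finset (Fin n)), ∏ j ∈ s, x j)
            * t ^ (n - k) := by
      rw [← Finset.sum_fiberwise_of_maps_to (g := Finset.card)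
        (t := Finset.range (n + 1)) (fun s hs => by
          rw [Finset.mem_range, Nat.lt_succ_iff]
          simpa using (Finset.card_le_card (Finset.mem_powerset.mp hs)))]
      refine Finset.sum_congr rfl fun k _ => ?_
      rw [Finset.sum_mul]
      refine Finset.sum_congr ?_ fun s hs => ?_
      · rw [Finset.powersetCard_eq_filter]
      · rw [Finset.powersetCard_eq_filter, Finset.mem_filter] at hs
        rw [hs.2]
    have key : (0 : ℝ) = ∑ k ∈ Finset.range (n + 1),
          (∑ s ∈ Finset.powersetCard k (Finset.univ : Finset (Fin n)), ∏ j ∈ s, x j)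
            * t ^ (n - k) := by rw [← hfib, ← hexp, hzero]
    rw [Finset.sum_range_succ'] at key
    have h0 : (∑ s ∈ Finset.powersetCard 0 (Finset.univ : Finset (Fin n)), ∏ j ∈ s, x j)
        * t ^ (n - 0) = t ^ n := by
      rw [Finset.powersetCard_zero]
      simp
    rw [h0] at key
    have hrest : 0 ≤ ∑ k ∈ Finset.range n,
        (∑ s ∈ Finset.powersetCard (k + 1) (Finset.univ : Finset (Fin n)), ∏ j ∈ s, x j)
          * t ^ (n - (k + 1)) := by
      refine Finset.sum_nonneg fun k hk => ?_
      have := he (k + 1) (Nat.le_add_left 1 k) (Finset.mem_range.mp hk)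
      positivity
    have htn : 0 < t ^ n := pow_pos ht0 n
    linarith
end
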